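/- arXiv:1710.03423 — 2 statements merged into one kernel-verified Lean document; each statement's English description precedes it below -/
import Mathlib

section
/- Let α : [0,l] → M be a unit-speed piecewise smooth closed curve lying in a coordinate chart (U, (x^1,...,x^m)) of a Riemannian m-manifold, where the metric matrix satisfies C^{-1} I ≤ (g_{ij}) ≤ C I and the Christoffel symbols satisfy |Γ_{ij}^k| ≤ μ for all i,j,k. Then any unit parallel vector field v(s) along α satisfies |v(0) − v(l)|² ≤ m^5 C^3 μ² l². -/
open Real Set

/-- Lemma 5.2 (holonomy of parallel transport in a coordinate chart).
`x` is the coordinate expression of the closed curve `α`, `v` its parallel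
vector field in coordinates, `g s` the matrix of the metric at `α s`, and
`Γ s` the Christoffel symbols at `α s`. -/
theorem stmt_0 (m : ℕ) (C μ l : ℝ) (hC : 0 < C) (hμ : 0 ≤ μ) (hl : 0 ≤ l)
    (x v : ℝ → Fin m → ℝ) (g : ℝ → Matrix (Fin m) (Fin m) ℝ)
    (Γ : ℝ → Fin m → Fin m → Fin m → ℝ)
    -- the curve is closed
    (hclosed : x 0 = x l) (hgclosed : g 0 = g l)
    -- metric bounds  C⁻¹ I ≤ (g_{ij}) ≤ C I  along the curve
    (hglow : ∀ s ∈ Icc 0 l, ∀ w : Fin m → ℝ,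
      C⁻¹ * ∑ i, (w i) ^ 2 ≤ ∑ i, ∑ j, g s i j * w i * w j)
    (hgup : ∀ s ∈ Icc 0 l, ∀ w : Fin m → ℝ,
      ∑ i, ∑ j, g s i j * w i * w j ≤ C * ∑ i, (w i) ^ 2)
    -- Christoffel symbol bound
    (hΓ : ∀ s ∈ Icc 0 l, ∀ i j k, |Γ s i j k| ≤ μ)
    -- unit speed
    (hunit : ∀ s ∈ Icc 0 l,
      ∑ i, ∑ j, g s i j * (deriv (fun t => x t i) s) * (deriv (fun t => x t j) s) = 1)
    -- `v` is a unit vector field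
    (hvunit : ∀ s ∈ Icc 0 l, ∑ i, ∑ j, g s i j * v s i * v s j = 1)
    -- `v` is parallel along the curve:  (v^k)' = -∑ v^i (x^j)' Γ_{ij}^k
    (hpar : ∀ s ∈ Icc 0 l, ∀ k, HasDerivAt (fun t => v t k)
      (-∑ i, ∑ j, v s i * deriv (fun t => x t j) s * Γ s i j k) s) :
    ∑ i, ∑ j, g 0 i j * (v 0 i - v l i) * (v 0 j - v l j)
      ≤ (m : ℝ) ^ 5 * C ^ 3 * μ ^ 2 * l ^ 2 := by

  have h0 : (0:ℝ) ∈ Icc 0 l := ⟨le_refl 0, hl⟩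
  have hlmem : l ∈ Icc 0 l := ⟨hl, le_refl l⟩
  -- componentwise bound on v
  have hsq : ∀ s ∈ Icc 0 l, ∀ w : Fin m → ℝ,
      (∑ i, ∑ j, g s i j * w i * w j) = 1 → ∀ i, (w i)^2 ≤ C := by
    intro s hs w hw i
    have h1 : C⁻¹ * ∑ i, (w i) ^ 2 ≤ 1 := by
      have := hglow s hs w; rw [hw] at this; exact this
    have hsum : ∑ i, (w i) ^ 2 ≤ C := by
      rw [inv_mul_le_iff₀ hC] at h1; simpa using h1
    exact le_trans (Finset.single_le_sum (fun j _ => sq_nonneg (w j)) (Finset.mem_univ i)) hsum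
  have hv_sq : ∀ s ∈ Icc 0 l, ∀ i, (v s i)^2 ≤ C :=
    fun s hs => hsq s hs (v s) (hvunit s hs)
  have hx_sq : ∀ s ∈ Icc 0 l, ∀ j, (deriv (fun t => x t j) s)^2 ≤ C :=
    fun s hs => hsq s hs (fun j => deriv (fun t => x t j) s) (hunit s hs)
  set B : ℝ := (m:ℝ)^2 * C * μ with hB
  have hBnn : 0 ≤ B := by positivity
  -- bound the derivative of v
  have hderiv_bd : ∀ s ∈ Icc 0 l, ∀ k,
      |(-∑ i, ∑ j, v s i * deriv (fun t => x t j) s * Γ s i j k)| ≤ B := by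
    intro s hs k
    rw [abs_neg]
    have hterm : ∀ i j, |v s i * deriv (fun t => x t j) s * Γ s i j k| ≤ C * μ := by
      intro i j
      rw [abs_mul, abs_mul]
      have h1 : |v s i| * |deriv (fun t => x t j) s| ≤ C := by
        nlinarith [hv_sq s hs i, hx_sq s hs j, sq_abs (v s i),
          sq_abs (deriv (fun t => x t j) s), abs_nonneg (v s i),
          abs_nonneg (deriv (fun t => x t j) s),
          sq_nonneg (|v s i| - |deriv (fun t => x t j) s|)]
      exact mul_le_mul h1 (hΓ s hs i j k) (abs_nonneg _) hC.le
    calc |∑ i, ∑ j, v s i * deriv (fun t => x t j) s * Γ s i j k|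
        ≤ ∑ i, |∑ j, v s i * deriv (fun t => x t j) s * Γ s i j k| :=
          Finset.abs_sum_le_sum_abs _ _
      _ ≤ ∑ i : Fin m, ∑ j : Fin m, |v s i * deriv (fun t => x t j) s * Γ s i j k| :=
          Finset.sum_le_sum (fun i _ => Finset.abs_sum_le_sum_abs _ _)
      _ ≤ ∑ _i : Fin m, ∑ _j : Fin m, C * μ :=
          Finset.sum_le_sum (fun i _ => Finset.sum_le_sum (fun j _ => hterm i j))
      _ = B := by simp [hB]; ring
  -- mean value inequality
  have key : ∀ k, |v l k - v 0 k| ≤ B * l := by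
    intro k
    have := norm_image_sub_le_of_norm_deriv_le_segment'
      (f := fun t => v t k)
      (f' := fun s => -∑ i, ∑ j, v s i * deriv (fun t => x t j) s * Γ s i j k)
      (fun s hs => (hpar s hs k).hasDerivWithinAt)
      (fun s hs => hderiv_bd s (Ico_subset_Icc_self hs) k) l hlmem
    simpa using this
  have hcomp : ∀ i, (v 0 i - v l i)^2 ≤ (B * l)^2 := by
    intro i
    have h1 : |v 0 i - v l i| ≤ B * l := by
      rw [abs_sub_comm]; exact key i
    have h2 := abs_le.mp h1
    nlinarith [h2.1, h2.2]
  calc ∑ i, ∑ j, g 0 i j * (v 0 i - v l i) * (v 0 j - v l j)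
      ≤ C * ∑ i, (v 0 i - v l i)^2 := hgup 0 h0 (fun i => v 0 i - v l i)
    _ ≤ C * ∑ _i : Fin m, (B * l)^2 :=
        mul_le_mul_of_nonneg_left (Finset.sum_le_sum fun i _ => hcomp i) hC.le
    _ = (m : ℝ) ^ 5 * C ^ 3 * μ ^ 2 * l ^ 2 := by
        simp [hB]; ring
end

section
/- Every submetry f : ℝ^m → ℝ^n between Euclidean spaces is, up to an isometry of ℝ^n, an orthogonal projection composed with a translation. In particular, the fibers of f are parallel affine (m−n)-dimensional subspaces of ℝ^m. -/
/-!
A submetry is 1-Lipschitz and lifts every point of a ball around `f x` to the ball of the same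
radius around `x`. Fix a unit vector `w` and lift `f 0 + K • w` to a point `p` with
`K ≤ ‖p‖ ≤ K + 1 / K`. Since `f` is 1-Lipschitz,
`⟪f y - f 0, w⟫ ≥ K - ‖y - p‖ ≥ ⟪y, p / ‖p‖⟫ - (1 + ‖y‖²) / K`; the same bound for `-w` and
for `-y` squeezes `y ↦ ⟪f y - f 0, w⟫` between linear functionals, so it is a pointwise limit of
linear functionals, hence linear. Thus `f = L + f 0` with `L` a linear submetry. Its adjoint is an
isometry: `‖L† v‖ ≤ ‖v‖` because `‖L‖ ≤ 1`, and if `L z = v` with `‖z‖` close to `‖v‖` then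
`‖v‖² = ⟪L† v, z⟫ ≤ ‖L† v‖ ‖z‖`. Finally `L = L††` is the inverse of `L†` onto its range composed
with the orthogonal projection onto that range.
-/

open Metric Set Filter Topology
open scoped RealInnerProductSpace InnerProduct

def IsSubmetry {X Y : Type*} [PseudoMetricSpace X] [PseudoMetricSpace Y] (f : X → Y) : Prop :=
  ∀ x r, 0 < r → f '' ball x r = ball (f x) r

namespace IsSubmetry

variable {X Y : Type*} [PseudoMetricSpace X] [PseudoMetricSpace Y] {f : X → Y}

theorem lipschitzWith (hf : IsSubmetry f) : LipschitzWith 1 f := by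
  refine LipschitzWith.of_dist_le_mul fun a b => ?_
  by_contra! h
  rw [NNReal.coe_one, one_mul] at h
  have hfa : f a ∈ ball (f b) (dist (f a) (f b)) := by
    rw [← hf b _ (dist_nonneg.trans_lt h)]
    exact mem_image_of_mem f (mem_ball.2 h)
  exact lt_irrefl _ (mem_ball.1 hfa)

theorem exists_eq_dist_lt (hf : IsSubmetry f) {x : X} {y : Y} {r : ℝ} (h : dist y (f x) < r) :
    ∃ z, f z = y ∧ dist z x < r := by
  have hy : y ∈ f '' ball x r := by rwa [hf x r (dist_nonneg.trans_lt h)]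
  obtain ⟨z, hz, rfl⟩ := hy
  exact ⟨z, rfl, hz⟩

theorem sub_const {F : Type*} [SeminormedAddCommGroup F] {f : X → F} (hf : IsSubmetry f)
    (c : F) : IsSubmetry (fun x => f x - c) := fun x r hr => by
  change (IsometryEquiv.subRight c ∘ f) '' ball x r = ball (IsometryEquiv.subRight c (f x)) r
  rw [image_comp, hf x r hr, IsometryEquiv.image_ball]

end IsSubmetry

section InnerProductSpace

variable {E F : Type*} [NormedAddCommGroup E] [InnerProductSpace ℝ E]
  [NormedAddCommGroup F] [InnerProductSpace ℝ F]

theorem norm_sub_smul_le {u y : E} (hu : ‖u‖ = 1) {s : ℝ} (hs : 0 < s) :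
    ‖y - s • u‖ ≤ s - ⟪y, u⟫ + ‖y‖ ^ 2 / s := by
  have hyu : ⟪y, u⟫ ≤ ‖y‖ := by simpa [hu] using real_inner_le_norm y u
  have ht : ‖y‖ ^ 2 / s * s = ‖y‖ ^ 2 := div_mul_cancel₀ _ hs.ne'
  have hsq : ‖y - s • u‖ ^ 2 = ‖y‖ ^ 2 - 2 * s * ⟪y, u⟫ + s ^ 2 := by
    rw [norm_sub_sq_real, real_inner_smul_right, norm_smul, hu, Real.norm_of_nonneg hs.le]
    ring
  have hrhs : 0 ≤ s - ⟪y, u⟫ + ‖y‖ ^ 2 / s := by nlinarith [sq_nonneg (s - ‖y‖)]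
  refine le_of_pow_le_pow_left₀ two_ne_zero hrhs ?_
  -- the difference of the squares is `(⟪y, u⟫ - ‖y‖ ^ 2 / s) ^ 2 + ‖y‖ ^ 2`
  rw [hsq]
  nlinarith [sq_nonneg (⟪y, u⟫ - ‖y‖ ^ 2 / s), sq_nonneg ‖y‖]

theorem LipschitzWith.inner_sub_ge_of_apply_eq {f : E → F} (hf : LipschitzWith 1 f) {w : F}
    (hw : ‖w‖ = 1) {K δ : ℝ} (hK : 0 < K) {p : E} (hp : f p = f 0 + K • w)
    (hpK : ‖p‖ ≤ K + δ) (y : E) :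
    ⟪y, ‖p‖⁻¹ • p⟫ - (δ + ‖y‖ ^ 2 / K) ≤ ⟪f y - f 0, w⟫ := by
  have hlip (a b : E) : ‖f a - f b‖ ≤ ‖a - b‖ := by simpa using hf.norm_sub_le a b
  have hKp : K ≤ ‖p‖ := by simpa [hp, norm_smul, hw, abs_of_pos hK] using hlip p 0
  have hp0 : ‖p‖ ≠ 0 := (hK.trans_le hKp).ne'
  have hcoord : ⟪f y - f 0, w⟫ = K - ⟪f p - f y, w⟫ := by
    rw [show f p - f y = K • w - (f y - f 0) by rw [hp]; abel, inner_sub_left (K • w),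
      real_inner_smul_left, real_inner_self_eq_norm_sq, hw]
    ring
  have hfar : ⟪f p - f y, w⟫ ≤ ‖y - ‖p‖ • (‖p‖⁻¹ • p)‖ := by
    rw [smul_inv_smul₀ hp0, norm_sub_rev]
    simpa [hw] using (real_inner_le_norm _ w).trans
      (mul_le_mul_of_nonneg_right (hlip p y) (norm_nonneg w))
  have hu : ‖‖p‖⁻¹ • p‖ = 1 := by rw [norm_smul, norm_inv, norm_norm, inv_mul_cancel₀ hp0]
  have hnear := norm_sub_smul_le (y := y) hu (hK.trans_le hKp)
  have hdiv : ‖y‖ ^ 2 / ‖p‖ ≤ ‖y‖ ^ 2 / K := by gcongr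
  linarith

theorem isLinearMap_of_tendsto_inner {g : E → F}
    (h : ∀ w, ∃ u : ℕ → E, ∀ y, Tendsto (fun k => ⟪y, u k⟫) atTop (𝓝 ⟪g y, w⟫)) :
    IsLinearMap ℝ g where
  map_add y y' := ext_inner_right ℝ fun w => by
    obtain ⟨u, hu⟩ := h w
    rw [inner_add_left]
    exact tendsto_nhds_unique (hu _) (by simpa only [inner_add_left] using (hu y).add (hu y'))
  map_smul c y := ext_inner_right ℝ fun w => by
    obtain ⟨u, hu⟩ := h w
    rw [real_inner_smul_left]
    exact tendsto_nhds_unique (hu _)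
      (by simpa only [real_inner_smul_left] using (hu y).const_mul c)

namespace IsSubmetry

variable {f : E → F}

theorem exists_tendsto_inner_of_norm_eq_one (hf : IsSubmetry f) {w : F} (hw : ‖w‖ = 1) :
    ∃ u : ℕ → E, ∀ y, Tendsto (fun k => ⟪y, u k⟫) atTop (𝓝 ⟪f y - f 0, w⟫) := by
  have hlift (k : ℕ) (v : F) (hv : ‖v‖ = 1) :
      ∃ p, f p = f 0 + ((k : ℝ) + 1) • v ∧ ‖p‖ ≤ (k + 1) + 1 / (k + 1) := by
    obtain ⟨p, hp, hpr⟩ := hf.exists_eq_dist_lt (x := 0) (y := f 0 + ((k : ℝ) + 1) • v)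
      (r := (k + 1) + 1 / (k + 1))
      (by simp [norm_smul, hv, abs_of_pos (Nat.cast_add_one_pos (α := ℝ) k)]; positivity)
    exact ⟨p, hp, by simpa using hpr.le⟩
  choose p hp hpK using fun k => hlift k w hw
  choose q hq hqK using fun k => hlift k (-w) (by rwa [norm_neg])
  refine ⟨fun k => ‖p k‖⁻¹ • p k, fun y => ?_⟩
  set ε : ℕ → ℝ := fun k => (1 + ‖y‖ ^ 2) / (k + 1)
  -- the lower bounds for `w` and `-w`, at `y` and at `-y`, squeeze the coordinate
  have hclose (k : ℕ) : ‖⟪y, ‖p k‖⁻¹ • p k⟫ - ⟪f y - f 0, w⟫‖ ≤ 3 * ε k := by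
    have hK : (0 : ℝ) < k + 1 := by positivity
    have hw' : ‖-w‖ = 1 := by rwa [norm_neg]
    have h₁ := hf.lipschitzWith.inner_sub_ge_of_apply_eq hw hK (hp k) (hpK k) y
    have h₂ := hf.lipschitzWith.inner_sub_ge_of_apply_eq hw hK (hp k) (hpK k) (-y)
    have h₃ := hf.lipschitzWith.inner_sub_ge_of_apply_eq hw' hK (hq k) (hqK k) y
    have h₄ := hf.lipschitzWith.inner_sub_ge_of_apply_eq hw' hK (hq k) (hqK k) (-y)
    simp only [inner_neg_left, inner_neg_right, norm_neg] at h₂ h₃ h₄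
    have hεk : ε k = 1 / (k + 1) + ‖y‖ ^ 2 / (k + 1) := add_div _ _ _
    rw [Real.norm_eq_abs, abs_le]
    constructor <;> linarith
  have hε : Tendsto (fun k => 3 * ε k) atTop (𝓝 0) := by
    have h := (tendsto_one_div_add_atTop_nhds_zero_nat (𝕜 := ℝ)).const_mul (1 + ‖y‖ ^ 2)
    simp only [mul_zero, mul_one_div] at h
    simpa using h.const_mul 3
  exact tendsto_iff_norm_sub_tendsto_zero.2 (squeeze_zero (fun _ => norm_nonneg _) hclose hε)

theorem exists_tendsto_inner (hf : IsSubmetry f) (w : F) :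
    ∃ u : ℕ → E, ∀ y, Tendsto (fun k => ⟪y, u k⟫) atTop (𝓝 ⟪f y - f 0, w⟫) := by
  rcases eq_or_ne w 0 with rfl | hw
  · exact ⟨0, fun y => by simp⟩
  have hw₀ : ‖w‖ ≠ 0 := norm_ne_zero_iff.2 hw
  obtain ⟨u, hu⟩ := hf.exists_tendsto_inner_of_norm_eq_one (w := ‖w‖⁻¹ • w)
    (by rw [norm_smul, norm_inv, norm_norm, inv_mul_cancel₀ hw₀])
  refine ⟨fun k => ‖w‖ • u k, fun y => ?_⟩
  simpa [real_inner_smul_right, mul_inv_cancel_left₀ hw₀] using (hu y).const_mul ‖w‖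

theorem exists_continuousLinearMap (hf : IsSubmetry f) :
    ∃ L : E →L[ℝ] F, IsSubmetry L ∧ ∀ x, f x = L x + f 0 := by
  have hg := hf.sub_const (f 0)
  let L := (isLinearMap_of_tendsto_inner hf.exists_tendsto_inner).mk'.mkContinuous 1 fun y => by
    simpa using hg.lipschitzWith.norm_sub_le y 0
  exact ⟨L, hg, fun x => (sub_add_cancel _ _).symm⟩

theorem norm_adjoint_apply [CompleteSpace E] [CompleteSpace F] {L : E →L[ℝ] F}
    (hL : IsSubmetry L) (v : F) : ‖(L†) v‖ = ‖v‖ := by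
  have hLnorm : ‖L†‖ ≤ 1 := by
    rw [LinearIsometryEquiv.norm_map]
    exact L.opNorm_le_bound zero_le_one fun y => by simpa using hL.lipschitzWith.norm_sub_le y 0
  refine le_antisymm (by simpa using (L†).le_of_opNorm_le hLnorm v) ?_
  have hbound (r : ℝ) (hr : ‖v‖ < r) : ‖v‖ ^ 2 ≤ ‖(L†) v‖ * r := by
    obtain ⟨z, rfl, hz⟩ := hL.exists_eq_dist_lt (x := 0) (by simpa using hr)
    rw [dist_zero_right] at hz
    calc ‖L z‖ ^ 2 = ⟪(L†) (L z), z⟫ := by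
          rw [ContinuousLinearMap.adjoint_inner_left, real_inner_self_eq_norm_sq]
      _ ≤ ‖(L†) (L z)‖ * ‖z‖ := real_inner_le_norm _ _
      _ ≤ ‖(L†) (L z)‖ * r := by gcongr
  by_contra! h
  nlinarith [hbound (‖v‖ + (‖v‖ - ‖(L†) v‖) / 2) (by linarith [norm_nonneg ((L†) v)]),
    norm_nonneg ((L†) v)]

theorem exists_linearIsometry [CompleteSpace E] [CompleteSpace F] (hf : IsSubmetry f) :
    ∃ T : F →ₗᵢ[ℝ] E, ∀ x, f x = (T.toContinuousLinearMap†) x + f 0 := by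
  obtain ⟨L, hL, hfL⟩ := hf.exists_continuousLinearMap
  refine ⟨⟨(L†).toLinearMap, hL.norm_adjoint_apply⟩, fun x => ?_⟩
  rw [hfL x]
  exact congrArg (· x + f 0) (ContinuousLinearMap.adjoint_adjoint L).symm

end IsSubmetry

theorem LinearIsometry.adjoint_apply_eq_equivRange_symm [CompleteSpace E] [CompleteSpace F]
    (T : F →ₗᵢ[ℝ] E) [CompleteSpace (LinearMap.range T.toLinearMap)] (x : E) :
    (T.toContinuousLinearMap†) x =
      T.equivRange.symm ((LinearMap.range T.toLinearMap).orthogonalProjectionOnto x) := by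
  have hT : T.toContinuousLinearMap =
      (LinearMap.range T.toLinearMap).subtypeL ∘L (T.equivRange : F →L[ℝ] _) := by
    ext; rfl
  rw [hT, ContinuousLinearMap.adjoint_comp, Submodule.adjoint_subtypeL,
    LinearIsometryEquiv.adjoint_eq_symm]
  rfl

end InnerProductSpace

theorem stmt_8_general (m n : ℕ)
    (f : EuclideanSpace ℝ (Fin m) → EuclideanSpace ℝ (Fin n))
    (hsub : ∀ (x : EuclideanSpace ℝ (Fin m)) (r : ℝ), 0 < r →
      f '' ball x r = ball (f x) r) :
    ∃ (V : Submodule ℝ (EuclideanSpace ℝ (Fin m)))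
      (e : V ≃ₗᵢ[ℝ] EuclideanSpace ℝ (Fin n)) (b : EuclideanSpace ℝ (Fin n)),
      Module.finrank ℝ V = n ∧
      ∀ x, f x = e (V.orthogonalProjectionOnto x) + b := by
  obtain ⟨T, hfT⟩ := IsSubmetry.exists_linearIsometry hsub
  refine ⟨LinearMap.range T.toLinearMap, T.equivRange.symm, f 0, ?_, fun x => ?_⟩
  · rw [← T.equivRange.toLinearEquiv.finrank_eq, finrank_euclideanSpace_fin]
  · rw [hfT x, T.adjoint_apply_eq_equivRange_symm]

/-- A submetry `f : ℝ^m → ℝ^n` is, up to a linear isometry of the target, an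
orthogonal projection onto an `n`-dimensional subspace composed with a
translation; in particular its fibers are parallel affine `(m−n)`-dimensional
subspaces. -/
theorem stmt_8 (m n : ℕ)
    (f : EuclideanSpace ℝ (Fin m) → EuclideanSpace ℝ (Fin n))
    (hsurj : Function.Surjective f)
    (hsub : ∀ (x : EuclideanSpace ℝ (Fin m)) (r : ℝ), 0 < r →
      f '' ball x r = ball (f x) r) :
    ∃ (V : Submodule ℝ (EuclideanSpace ℝ (Fin m)))
      (e : V ≃ₗᵢ[ℝ] EuclideanSpace ℝ (Fin n)) (b : EuclideanSpace ℝ (Fin n)),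
      Module.finrank ℝ V = n ∧
      ∀ x, f x = e (V.orthogonalProjectionOnto x) + b :=
  stmt_8_general m n f hsub
end
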